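/- arXiv:1810.12755 — 5 statements merged into one kernel-verified Lean document; each statement's English description precedes it below -/
import Mathlib

section
/- If c is a group p-cocycle and c' a group q-cocycle with values in a G-module A, then their cup product c ∪ c' defined by (c ∪ c')(g₁,...,g_{p+q}) = c(g₁,...,gₚ).(g_{p+1}···g_{p+q}) ⊗ c'(g_{p+1},...,g_{p+q}) is a (p+q)-cocycle with values in A ⊗ A, where it satisfies δ(c ∪ c') = δc ∪ c' + (-1)^p c ∪ δc'. -/
set_option maxHeartbeats 1000000
set_option linter.unreachableTactic false
set_option linter.unnecessarySeqFocus false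
set_option linter.unusedTactic false


open scoped TensorProduct

/-- The inhomogeneous group coboundary for a right `G`-module `B` (action `act`). -/
def gcb {G B : Type} [Group G] [AddCommGroup B] (act : B → G → B)
    (p : ℕ) (c : (Fin p → G) → B) : (Fin (p + 1) → G) → B :=
  fun g =>
    c (fun i => g i.succ)
      + ∑ i : Fin p, ((-1 : ℤ) ^ ((i : ℕ) + 1)) • c (Fin.contractNth i.castSucc (· * ·) g)
      + ((-1 : ℤ) ^ (p + 1)) • act (c (fun i => g i.castSucc)) (g (Fin.last p))

/-- Cup product of a `p`-cochain and a `q`-cochain with values in a right `G`-module `A`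
(given as `ρ : G → A →+ A`), with values in `A ⊗ A`:
`(c ∪ c')(g₁,…,g_{p+q}) = c(g₁,…,g_p).(g_{p+1}⋯g_{p+q}) ⊗ c'(g_{p+1},…,g_{p+q})`. -/
noncomputable def gcup {G A : Type} [Group G] [AddCommGroup A] (ρ : G → A →+ A)
    (p q : ℕ) (c : (Fin p → G) → A) (c' : (Fin q → G) → A) :
    (Fin (p + q) → G) → A ⊗[ℤ] A :=
  fun g =>
    (ρ ((List.ofFn fun i : Fin q => g (Fin.natAdd p i)).prod)
        (c fun i => g (Fin.castAdd q i)))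
      ⊗ₜ[ℤ] (c' fun i => g (Fin.natAdd p i))

theorem prod_ofFn_contractNth {G : Type} [Monoid G] :
    ∀ {m : ℕ} (j : Fin m) (f : Fin (m + 1) → G),
      (List.ofFn (Fin.contractNth j.castSucc (· * ·) f)).prod = (List.ofFn f).prod := by
  intro m
  induction m with
  | zero => exact fun j => j.elim0
  | succ m ih =>
    intro j f
    rcases Fin.eq_zero_or_eq_succ j with hj | ⟨j', rfl⟩
    · subst hj
      simp only [List.ofFn_succ, List.prod_cons]
      rw [Fin.contractNth_apply_of_eq _ _ _ _ (by simp)]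
      have h1 : ∀ i : Fin m,
          Fin.contractNth (Fin.castSucc 0) (· * ·) f i.succ = f i.succ.succ := fun i =>
        Fin.contractNth_apply_of_gt _ _ _ _ (by simp)
      simp only [h1]
      simp [mul_assoc]
    · have hcs : (Fin.castSucc (Fin.succ j')) = (Fin.castSucc j').succ := by
        simp [Fin.succ_castSucc, -Fin.castSucc_succ]
      rw [hcs]
      simp only [List.ofFn_succ, List.prod_cons]
      have h0 : Fin.contractNth (Fin.castSucc j').succ (· * ·) f 0 = f 0 := by
        rw [Fin.contractNth_apply_of_lt _ _ _ _ (by simp)]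
        simp
      have h1 : ∀ i : Fin m,
          Fin.contractNth (Fin.castSucc j').succ (· * ·) f i.succ
            = Fin.contractNth (Fin.castSucc j') (· * ·) (fun k => f k.succ) i := by
        intro i
        rcases lt_trichotomy (i : ℕ) (j' : ℕ) with h | h | h
        · rw [Fin.contractNth_apply_of_lt _ _ _ _ (by simp [h]),
            Fin.contractNth_apply_of_lt _ _ _ _ (by simpa using h)]
          simp [Fin.succ_castSucc, -Fin.castSucc_succ]
        · rw [Fin.contractNth_apply_of_eq _ _ _ _ (by simp [h]),
            Fin.contractNth_apply_of_eq _ _ _ _ (by simpa using h)]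
          simp [Fin.succ_castSucc, -Fin.castSucc_succ]
        · rw [Fin.contractNth_apply_of_gt _ _ _ _ (by simp [h]),
            Fin.contractNth_apply_of_gt _ _ _ _ (by simpa using h)]
      rw [h0]
      simp only [h1]
      rw [ih j' (fun k => f k.succ)]
      rw [List.ofFn_succ, List.prod_cons]

section helpers
variable {G : Type} [Group G]

theorem cA {p q : ℕ} (g : Fin (p + q + 1) → G) (gg : ℕ → G)
    (hg : ∀ j, g j = gg (j : ℕ)) (i₀ : Fin p) :
    (fun k : Fin p => Fin.contractNth (Fin.castSucc (Fin.castAdd q i₀)) (· * ·) g (Fin.castAdd q k))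
      = Fin.contractNth i₀.castSucc (· * ·) (fun i : Fin (p + 1) => gg (i : ℕ)) := by
  funext k
  have hk := k.isLt
  have hi := i₀.isLt
  simp only [Fin.contractNth, Fin.coe_castAdd, Fin.coe_natAdd, Fin.coe_castSucc, Fin.val_succ, hg]
  try (split_ifs <;> first | rfl | omega | (congr 1 <;> omega) | (congr 1 <;> congr 1 <;> omega))

theorem cB {p q : ℕ} (g : Fin (p + q + 1) → G) (gg : ℕ → G)
    (hg : ∀ j, g j = gg (j : ℕ)) (i₀ : Fin p) :
    (fun j : Fin q => Fin.contractNth (Fin.castSucc (Fin.castAdd q i₀)) (· * ·) g (Fin.natAdd p j))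
      = fun j : Fin q => gg (p + 1 + (j : ℕ)) := by
  funext k
  have hk := k.isLt
  have hi := i₀.isLt
  simp only [Fin.contractNth, Fin.coe_castAdd, Fin.coe_natAdd, Fin.coe_castSucc, Fin.val_succ, hg]
  try (split_ifs <;> first | rfl | omega | (congr 1 <;> omega) | (congr 1 <;> congr 1 <;> omega))

theorem cC {p q : ℕ} (g : Fin (p + q + 1) → G) (gg : ℕ → G)
    (hg : ∀ j, g j = gg (j : ℕ)) (j₀ : Fin q) :
    (fun k : Fin p => Fin.contractNth (Fin.castSucc (Fin.natAdd p j₀)) (· * ·) g (Fin.castAdd q k))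
      = fun k : Fin p => gg (k : ℕ) := by
  funext k
  have hk := k.isLt
  have hi := j₀.isLt
  simp only [Fin.contractNth, Fin.coe_castAdd, Fin.coe_natAdd, Fin.coe_castSucc, Fin.val_succ, hg]
  try (split_ifs <;> first | rfl | omega | (congr 1 <;> omega) | (congr 1 <;> congr 1 <;> omega))

theorem cD {p q : ℕ} (g : Fin (p + q + 1) → G) (gg : ℕ → G)
    (hg : ∀ j, g j = gg (j : ℕ)) (j₀ : Fin q) :
    (fun j : Fin q => Fin.contractNth (Fin.castSucc (Fin.natAdd p j₀)) (· * ·) g (Fin.natAdd p j))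
      = Fin.contractNth j₀.castSucc (· * ·) (fun j : Fin (q + 1) => gg (p + (j : ℕ))) := by
  funext k
  have hk := k.isLt
  have hi := j₀.isLt
  simp only [Fin.contractNth, Fin.coe_castAdd, Fin.coe_natAdd, Fin.coe_castSucc, Fin.val_succ, hg]
  try (split_ifs <;> first | rfl | omega | (congr 1 <;> omega) | (congr 1 <;> congr 1 <;> omega))

end helpers

theorem key {G A : Type} [Group G] [AddCommGroup A] (ρ : G → A →+ A)
    (hρm : ∀ g h : G, ρ (g * h) = (ρ h).comp (ρ g))
    (p q : ℕ) (c : (Fin p → G) → A) (c' : (Fin q → G) → A)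
    (g : Fin (p + q + 1) → G) :
    gcb (fun x g₀ => TensorProduct.map (ρ g₀).toIntLinearMap (ρ g₀).toIntLinearMap x)
        (p + q) (gcup ρ p q c c') g
      = gcup ρ (p + 1) q (gcb (fun a g₀ => ρ g₀ a) p c) c'
          (fun i => g (Fin.cast (Nat.add_right_comm p 1 q) i))
        + ((-1 : ℤ) ^ p) • gcup ρ p (q + 1) c (gcb (fun a g₀ => ρ g₀ a) q c')
          (fun i => g (Fin.cast (Nat.add_assoc p q 1).symm i)) := by
  obtain ⟨gg, hg⟩ : ∃ gg : ℕ → G, ∀ j : Fin (p + q + 1), g j = gg (j : ℕ) :=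
    ⟨fun i => if h : i < p + q + 1 then g ⟨i, h⟩ else 1, fun j => by simp [j.isLt]⟩
  simp only [gcb, gcup]
  rw [Fin.sum_univ_add]
  simp only [cA g gg hg, cB g gg hg, cC g gg hg, cD g gg hg, hg, Fin.coe_cast,
    Fin.coe_castAdd, Fin.coe_natAdd, Fin.coe_castSucc, Fin.val_succ, Fin.val_last,
    prod_ofFn_contractNth]
  have n1 : (fun i : Fin q => gg (p + (i : ℕ) + 1)) = fun i : Fin q => gg (p + 1 + (i : ℕ)) := by
    funext i; congr 1; omega
  have n2 : (fun i : Fin q => gg (p + ((i : ℕ) + 1))) = fun i : Fin q => gg (p + 1 + (i : ℕ)) := by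
    funext i; congr 1; omega
  simp only [TensorProduct.map_tmul, AddMonoidHom.coe_toIntLinearMap, n1, n2]
  have hQ'2 : (List.ofFn fun j : Fin (q + 1) => gg (p + (j : ℕ))).prod
      = (List.ofFn fun j : Fin q => gg (p + (j : ℕ))).prod * gg (p + q) := by
    rw [List.ofFn_succ', List.prod_concat]
    simp
  have hQ'1 : (List.ofFn fun j : Fin (q + 1) => gg (p + (j : ℕ))).prod
      = gg p * (List.ofFn fun j : Fin q => gg (p + 1 + (j : ℕ))).prod := by
    rw [List.ofFn_succ, List.prod_cons]
    simp only [Fin.val_succ, n2]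
    simp
  have hcomp1 : ∀ x : A,
      ρ (gg (p + q)) ((ρ ((List.ofFn fun j : Fin q => gg (p + (j : ℕ))).prod)) x)
        = ρ ((List.ofFn fun j : Fin (q + 1) => gg (p + (j : ℕ))).prod) x := by
    intro x; rw [hQ'2, hρm]; rfl
  have hcomp2 : ∀ x : A,
      ρ ((List.ofFn fun j : Fin q => gg (p + 1 + (j : ℕ))).prod) (ρ (gg p) x)
        = ρ ((List.ofFn fun j : Fin (q + 1) => gg (p + (j : ℕ))).prod) x := by
    intro x; rw [hQ'1, hρm]; rfl
  simp only [map_add, map_zsmul, map_sum, TensorProduct.add_tmul, TensorProduct.sum_tmul,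
    TensorProduct.smul_tmul, TensorProduct.tmul_add, TensorProduct.tmul_sum,
    TensorProduct.tmul_smul, smul_add, Finset.smul_sum, smul_smul]
  simp only [hcomp1, hcomp2]
  have hpow : ∀ a b : ℕ, ((-1 : ℤ)) ^ a * (-1) ^ b = (-1) ^ (a + b) := fun a b =>
    (pow_add (-1 : ℤ) a b).symm
  simp only [hpow, ← add_assoc]
  have hs : ((-1 : ℤ)) ^ (p + 1) = -((-1 : ℤ)) ^ p := by rw [pow_succ]; ring
  simp only [hs, neg_smul]
  abel

/-- The cup product satisfies the Leibniz rule
`δ(c ∪ c') = δc ∪ c' + (-1)^p c ∪ δc'`; in particular, the cup product of two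
cocycles is a cocycle (with values in `A ⊗ A`, carrying the diagonal action). -/
theorem cup_product_leibniz_and_cocycle
    {G A : Type} [Group G] [AddCommGroup A] (ρ : G → A →+ A)
    (hρ1 : ρ 1 = AddMonoidHom.id A)
    (hρm : ∀ g h : G, ρ (g * h) = (ρ h).comp (ρ g))
    (p q : ℕ) (c : (Fin p → G) → A) (c' : (Fin q → G) → A) :
    (∀ g : Fin (p + q + 1) → G,
      gcb (fun x g₀ => TensorProduct.map (ρ g₀).toIntLinearMap (ρ g₀).toIntLinearMap x)
          (p + q) (gcup ρ p q c c') g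
        = gcup ρ (p + 1) q (gcb (fun a g₀ => ρ g₀ a) p c) c'
            (fun i => g (Fin.cast (by omega) i))
          + ((-1 : ℤ) ^ p) • gcup ρ p (q + 1) c (gcb (fun a g₀ => ρ g₀ a) q c')
            (fun i => g (Fin.cast (by omega) i))) ∧
    (gcb (fun a g₀ => ρ g₀ a) p c = 0 → gcb (fun a g₀ => ρ g₀ a) q c' = 0 →
      gcb (fun x g₀ => TensorProduct.map (ρ g₀).toIntLinearMap (ρ g₀).toIntLinearMap x)
          (p + q) (gcup ρ p q c c') = 0) := by
  refine ⟨key ρ hρm p q c c', fun h1 h2 => ?_⟩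
  funext g
  rw [show (0 : (Fin (p + q + 1) → G) → A ⊗[ℤ] A) g = 0 from rfl]
  rw [key ρ hρm p q c c' g, h1, h2]
  simp [gcup]
end

section
/- Let G be a group, V and A right G-modules, θ : G → V a group 1-cocycle, and ω : V ⊗ V → A a G-equivariant bilinear form. Then the group 2-cochain (g,h) ↦ ω(θ(g).h, θ(h)) is a group 2-cocycle on G with values in A. -/
/-- Let `G` act on the right on modules `V` and `A`, let `θ : G → V` be a 1-cocycle
(`θ(gh) = θ(g).h + θ(h)`), and let `ω : V → V → A` be a `G`-equivariant bilinear form.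
Then `c(g,h) = ω(θ(g).h, θ(h))` is a group 2-cocycle:
`c(h,k) - c(gh,k) + c(g,hk) - c(g,h).k = 0`. -/
theorem cup_of_cocycle_with_equivariant_form_is_two_cocycle
    {G V A : Type*} [Group G] [AddCommGroup V] [AddCommGroup A]
    (actV : V → G → V) (actA : A → G → A)
    (hV_one : ∀ v : V, actV v 1 = v)
    (hV_mul : ∀ (v : V) (g h : G), actV (actV v g) h = actV v (g * h))
    (hV_add : ∀ (v w : V) (g : G), actV (v + w) g = actV v g + actV w g)
    (hA_one : ∀ a : A, actA a 1 = a)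
    (hA_mul : ∀ (a : A) (g h : G), actA (actA a g) h = actA a (g * h))
    (hA_add : ∀ (a b : A) (g : G), actA (a + b) g = actA a g + actA b g)
    (θ : G → V) (hθ : ∀ g h : G, θ (g * h) = actV (θ g) h + θ h)
    (ω : V → V → A)
    (hω_addl : ∀ v v' w : V, ω (v + v') w = ω v w + ω v' w)
    (hω_addr : ∀ v w w' : V, ω v (w + w') = ω v w + ω v w')
    (hω_equiv : ∀ (v w : V) (g : G), ω (actV v g) (actV w g) = actA (ω v w) g) :
    ∀ g h k : G,
      ω (actV (θ h) k) (θ k) - ω (actV (θ (g * h)) k) (θ k)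
        + ω (actV (θ g) (h * k)) (θ (h * k)) - actA (ω (actV (θ g) h) (θ h)) k = 0 := by
  intro g h k
  rw [hθ g h, hθ h k, hV_add, hω_addl, hω_addr, ← hV_mul, hω_equiv]
  abel
end

section
/- Let N ⊴ G and A a right G-module with G acting trivially on A. The transgression map d₂ : H^1(N;A)^G → H^2(G/N;A) is well defined: given a G-invariant homomorphism φ : N → A and a set-theoretic section s : G/N → G with s(1)=1, the function τ(x,y) = φ(s(x)s(y)s(xy)⁻¹) is a 2-cocycle on G/N, and its class is independent of the choice of s. -/
/-- Let `N ⊴ G` and `A` an abelian group with trivial `G`-action. The transgression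
`d₂ : H¹(N;A)^G → H²(G/N;A)` is well defined: given a `G`-invariant homomorphism
`φ : N → A` (here extended as a function on `G`, additive and conjugation-invariant on
`N`) and set-theoretic sections `s, s' : G/N → G` with `s 1 = 1`, `s' 1 = 1`, one has
`s(x)s(y)s(xy)⁻¹ ∈ N`, the function `τ(x,y) = φ(s(x)s(y)s(xy)⁻¹)` is a 2-cocycle on
`G/N`, and the classes of the cocycles built from `s` and `s'` agree (they differ
by a coboundary). -/
theorem transgression_well_defined
    {G A : Type*} [Group G] [AddCommGroup A]
    (N : Subgroup G) [N.Normal]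
    (φ : G → A)
    (hφ_add : ∀ m n : G, m ∈ N → n ∈ N → φ (m * n) = φ m + φ n)
    (hφ_inv : ∀ (g n : G), n ∈ N → φ (g * n * g⁻¹) = φ n)
    (s s' : G ⧸ N → G)
    (hs : ∀ x : G ⧸ N, ((s x : G) : G ⧸ N) = x)
    (hs' : ∀ x : G ⧸ N, ((s' x : G) : G ⧸ N) = x)
    (hs1 : s 1 = 1) (hs1' : s' 1 = 1)
    (τ τ' : G ⧸ N → G ⧸ N → A)
    (hτ : ∀ x y, τ x y = φ (s x * s y * (s (x * y))⁻¹))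
    (hτ' : ∀ x y, τ' x y = φ (s' x * s' y * (s' (x * y))⁻¹)) :
    (∀ x y : G ⧸ N, s x * s y * (s (x * y))⁻¹ ∈ N) ∧
    (∀ x y z : G ⧸ N, τ y z - τ (x * y) z + τ x (y * z) - τ x y = 0) ∧
    (∃ b : G ⧸ N → A, ∀ x y : G ⧸ N,
      τ' x y - τ x y = b y - b (x * y) + b x) := by
  have hN : N.Normal := inferInstance
  have φ1 : φ 1 = 0 := by
    have h := hφ_add 1 1 N.one_mem N.one_mem
    rw [mul_one] at h
    exact left_eq_add.mp h
  have φinv : ∀ n : G, n ∈ N → φ n⁻¹ = -φ n := by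
    intro n hn
    have h := hφ_add n n⁻¹ hn (N.inv_mem hn)
    rw [mul_inv_cancel, φ1] at h
    exact eq_neg_of_add_eq_zero_right h.symm
  have memf : ∀ x y : G ⧸ N, s x * s y * (s (x * y))⁻¹ ∈ N := by
    intro x y
    rw [← QuotientGroup.eq_one_iff]
    simp [hs]
  have memf' : ∀ x y : G ⧸ N, s' x * s' y * (s' (x * y))⁻¹ ∈ N := by
    intro x y
    rw [← QuotientGroup.eq_one_iff]
    simp [hs']
  have memc : ∀ x : G ⧸ N, s' x * (s x)⁻¹ ∈ N := by
    intro x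
    rw [← QuotientGroup.eq_one_iff]
    simp [hs, hs']
  refine ⟨memf, ?_, ?_⟩
  · intro x y z
    have hid : s x * (s y * s z * (s (y * z))⁻¹) * (s x)⁻¹ *
        (s x * s (y * z) * (s (x * (y * z)))⁻¹) =
        (s x * s y * (s (x * y))⁻¹) * (s (x * y) * s z * (s (x * y * z))⁻¹) := by
      rw [mul_assoc x y z]
      group
    have key : τ y z + τ x (y * z) = τ x y + τ (x * y) z := by
      rw [hτ, hτ, hτ, hτ]
      rw [← hφ_inv (s x) _ (memf y z),
        ← hφ_add _ _ (hN.conj_mem _ (memf y z) (s x)) (memf x (y * z)), hid,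
        hφ_add _ _ (memf x y) (memf (x * y) z)]
    calc τ y z - τ (x * y) z + τ x (y * z) - τ x y
        = (τ y z + τ x (y * z)) - (τ x y + τ (x * y) z) := by abel
      _ = 0 := by rw [key, sub_self]
  · refine ⟨fun x => φ (s' x * (s x)⁻¹), ?_⟩
    intro x y
    show τ' x y - τ x y = φ (s' y * (s y)⁻¹) - φ (s' (x * y) * (s (x * y))⁻¹) +
      φ (s' x * (s x)⁻¹)
    have hid2 : s' x * s' y * (s' (x * y))⁻¹ =
        (s' x * (s x)⁻¹) * (s x * (s' y * (s y)⁻¹) * (s x)⁻¹) *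
        ((s x * s y * (s (x * y))⁻¹) * (s' (x * y) * (s (x * y))⁻¹)⁻¹) := by
      group
    have e : φ (s' x * s' y * (s' (x * y))⁻¹) =
        φ (s' x * (s x)⁻¹) + φ (s' y * (s y)⁻¹) +
        (φ (s x * s y * (s (x * y))⁻¹) + -φ (s' (x * y) * (s (x * y))⁻¹)) := by
      rw [hid2,
        hφ_add _ _ (N.mul_mem (memc x) (hN.conj_mem _ (memc y) (s x)))
          (N.mul_mem (memf x y) (N.inv_mem (memc (x * y)))),
        hφ_add _ _ (memc x) (hN.conj_mem _ (memc y) (s x)),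
        hφ_add _ _ (memf x y) (N.inv_mem (memc (x * y))),
        hφ_inv (s x) _ (memc y), φinv _ (memc (x * y))]
    rw [hτ, hτ', e]
    abel
end

section
/- In the setting of the quotient group P = (G × A)/~ built from a 2-cocycle C on G, a 1-cochain Λ on N with C|_N = -δΛ, and the compatibility condition, the map A → P, a ↦ [1, a], is an injective homomorphism onto a central subgroup, the map P → G/N, [g,λ] ↦ gN, is a surjective homomorphism, and 0 → A → P → G/N → 1 is exact; i.e., P is a central extension of G/N by A. -/
/-- In the setting of the quotient group `P = (G × A)/~` built from a normalized
2-cocycle `C` on `G`, a 1-cochain `Λ` on `N` with `C|_N = -δΛ` and the compatibility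
condition: the map `a ↦ [1,a]` is an injective homomorphism of `A` onto a central
subgroup of `P`, the map `[g,λ] ↦ gN` is a surjective homomorphism `P → G/N`, and
`0 → A → P → G/N → 1` is exact, i.e. `P` is a central extension of `G/N` by `A`.
(All statements are phrased on representatives, modulo the relation `r`.) -/
theorem mickelsson_quotient_is_central_extension
    {G A : Type*} [Group G] [AddCommGroup A]
    (N : Subgroup G) [N.Normal]
    (C : G → G → A)
    (hC : ∀ g h k : G, C h k - C (g * h) k + C g (h * k) - C g h = 0)
    (hCn1 : ∀ g : G, C g 1 = 0) (hCn2 : ∀ g : G, C 1 g = 0)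
    (Λ : G → A) (hΛ1 : Λ 1 = 0)
    (hΛ : ∀ m n : G, m ∈ N → n ∈ N → C m n = Λ (m * n) - Λ m - Λ n)
    (hcompat : ∀ (g : G) (n : G), n ∈ N →
      Λ (g⁻¹ * n * g) - Λ n + C (g⁻¹ * n) g - C g⁻¹ n = 0)
    (r : G × A → G × A → Prop)
    (hr : ∀ x y : G × A, r x y ↔
      ∃ n ∈ N, y.1 = x.1 * n ∧ y.2 = x.2 + C x.1 n + Λ n)
    (mul : G × A → G × A → G × A)
    (hmul : ∀ x y : G × A, mul x y = (x.1 * y.1, x.2 + y.2 + C x.1 y.1))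
    (pr : G × A → G ⧸ N) (hpr : ∀ x : G × A, pr x = (x.1 : G ⧸ N)) :
    -- `a ↦ [1,a]` is injective modulo `r` …
    (∀ a b : A, r ((1 : G), a) ((1 : G), b) → a = b) ∧
    -- … a homomorphism …
    (∀ a b : A, mul (1, a) (1, b) = (1, a + b)) ∧
    -- … and central:
    (∀ (a : A) (x : G × A), mul (1, a) x = mul x (1, a)) ∧
    -- `pr` descends to the quotient, is surjective and a homomorphism:
    (∀ x y : G × A, r x y → pr x = pr y) ∧
    Function.Surjective pr ∧
    (∀ x y : G × A, pr (mul x y) = pr x * pr y) ∧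
    -- exactness: the kernel of `pr` is exactly the image of `A`:
    (∀ x : G × A, pr x = 1 ↔ ∃ a : A, r x (1, a)) := by
  refine ⟨?_, ?_, ?_, ?_, ?_, ?_, ?_⟩
  · intro a b h
    obtain ⟨n, hn, h1, h2⟩ := (hr _ _).1 h
    simp only at h1 h2
    have : n = 1 := by simpa using h1.symm
    subst this
    exact (by simpa [hCn1, hΛ1] using h2 : b = a).symm
  · intro a b
    simp [hmul, hCn1]
  · intro a x
    simp [hmul, hCn1, hCn2]
    abel
  · intro x y h
    obtain ⟨n, hn, h1, h2⟩ := (hr _ _).1 h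
    rw [hpr, hpr, h1]
    exact (QuotientGroup.mk_mul_of_mem _ hn).symm
  · intro q
    obtain ⟨g, rfl⟩ := QuotientGroup.mk_surjective q
    exact ⟨(g, 0), hpr _⟩
  · intro x y
    simp [hpr, hmul]
  · intro x
    rw [hpr]
    constructor
    · intro h
      have hx : x.1 ∈ N := (QuotientGroup.eq_one_iff _).1 h
      refine ⟨x.2 + C x.1 x.1⁻¹ + Λ x.1⁻¹, (hr _ _).2 ⟨x.1⁻¹, N.inv_mem hx, by simp, rfl⟩⟩
    · rintro ⟨a, h⟩
      obtain ⟨n, hn, h1, h2⟩ := (hr _ _).1 h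
      have : x.1 = n⁻¹ := by
        have := h1.symm
        simp only at this
        exact eq_inv_of_mul_eq_one_left this
      rw [(QuotientGroup.eq_one_iff _)]
      rw [this]; exact N.inv_mem hn
end

section
/- For matrix-valued functions: if g, h : M → GL(n) are smooth maps on a manifold M, then tr((g⁻¹dg)^3) - tr(((gh)⁻¹d(gh))^3) + tr((h⁻¹dh)^3) = 3 d tr(g⁻¹dg ∧ dh·h⁻¹), where products are wedge products of matrix-valued 1-forms and the Maurer–Cartan identity d(g⁻¹dg) = -(g⁻¹dg)∧(g⁻¹dg) is used. -/
/-- Polyakov–Wiegmann / Mickelsson identity for matrix-valued maps, formulated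
abstractly: let `Ω` be the (noncommutative) ring of matrix-valued differential forms
on a manifold, `d : Ω →+ Ω` the exterior derivative, `Ω₁` the additive subgroup of
matrix-valued 1-forms, `tr : Ω →+ C` the matrix trace with values in the scalar forms
`C`, and `dC` the exterior derivative on `C` (so `tr ∘ d = dC ∘ tr`). Let `g, h` be
smooth `GL(n)`-valued functions, i.e. invertible degree-0 elements, with
`α = g⁻¹dg`, `β = dh·h⁻¹`, `γ = h⁻¹dh` 1-forms, satisfying the Leibniz rule
`d(gh) = dg·h + g·dh`, the graded Leibniz rule on 1-forms, the Maurer–Cartan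
identities `dα = -α∧α`, `dγ = -γ∧γ`, `dβ = β∧β`, cyclicity of the trace on 1-forms
and conjugation invariance. Then
`tr((g⁻¹dg)³) - tr(((gh)⁻¹d(gh))³) + tr((h⁻¹dh)³) = 3·d tr(g⁻¹dg ∧ dh·h⁻¹)`. -/
theorem trace_cubed_polyakov_wiegmann_identity
    {Ω C : Type*} [Ring Ω] [AddCommGroup C]
    (d : Ω →+ Ω) (tr : Ω →+ C) (dC : C →+ C)
    (Ω₁ : AddSubgroup Ω)
    (g h : Ωˣ)
    (α β γ : Ω)
    (hα : α = (↑g⁻¹ : Ω) * d ↑g)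
    (hβ : β = d ↑h * (↑h⁻¹ : Ω))
    (hγ : γ = (↑h⁻¹ : Ω) * d ↑h)
    (hα1 : α ∈ Ω₁) (hβ1 : β ∈ Ω₁) (hγ1 : γ ∈ Ω₁)
    -- Leibniz rule for the product of the degree-0 elements `g` and `h`:
    (hgh : d (↑(g * h) : Ω) = d ↑g * ↑h + ↑g * d ↑h)
    -- graded Leibniz rule on 1-forms:
    (hLeib1 : ∀ x ∈ Ω₁, ∀ y ∈ Ω₁, d (x * y) = d x * y - x * d y)
    -- Maurer–Cartan identities:
    (hMCα : d α = -(α * α)) (hMCγ : d γ = -(γ * γ)) (hMCβ : d β = β * β)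
    -- the trace intertwines the differentials:
    (htrd : ∀ x : Ω, tr (d x) = dC (tr x))
    -- (graded) cyclicity of the trace on 1-forms:
    (hcyc : ∀ x ∈ Ω₁, ∀ y ∈ Ω₁, ∀ z ∈ Ω₁, tr (x * y * z) = tr (z * (x * y)))
    (hcyc12 : ∀ x ∈ Ω₁, ∀ y ∈ Ω₁, tr (x * d y) = tr (d y * x))
    -- conjugation invariance of the trace:
    (hconj : ∀ x : Ω, tr ((↑h⁻¹ : Ω) * x * ↑h) = tr x) :
    tr (α * α * α)
      - tr (((↑(g * h)⁻¹ : Ω) * d ↑(g * h)) * ((↑(g * h)⁻¹ : Ω) * d ↑(g * h))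
          * ((↑(g * h)⁻¹ : Ω) * d ↑(g * h)))
      + tr (γ * γ * γ)
      = 3 • dC (tr (α * β)) := by
  have hg1 : (↑g⁻¹ : Ω) * ↑g = 1 := g.inv_mul
  have hh1 : (↑h⁻¹ : Ω) * ↑h = 1 := h.inv_mul
  have hh2 : (↑h : Ω) * ↑h⁻¹ = 1 := h.mul_inv
  have hcoe : (↑(g*h)⁻¹ : Ω) = ↑h⁻¹ * ↑g⁻¹ := by
    rw [mul_inv_rev, Units.val_mul]
  have keyA : (↑(g*h)⁻¹ : Ω) * d ↑(g*h) = ↑h⁻¹ * (α + β) * ↑h := by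
    rw [hcoe, hgh, hα, hβ, mul_add, mul_add, add_mul]
    congr 1
    · rw [mul_assoc (↑h⁻¹ : Ω), mul_assoc (↑h⁻¹ : Ω), ← mul_assoc ((↑g⁻¹:Ω))]
    · rw [mul_assoc (↑h⁻¹ : Ω), ← mul_assoc ((↑g⁻¹:Ω)), hg1, one_mul,
        mul_assoc (↑h⁻¹ : Ω), mul_assoc (d ↑h), hh1, mul_one]
  have hA3 : tr (((↑(g*h)⁻¹ : Ω) * d ↑(g*h)) * ((↑(g*h)⁻¹ : Ω) * d ↑(g*h))
      * ((↑(g*h)⁻¹ : Ω) * d ↑(g*h))) = tr ((α+β) * (α+β) * (α+β)) := by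
    rw [keyA]
    have : (↑h⁻¹ * (α + β) * ↑h : Ω) * (↑h⁻¹ * (α + β) * ↑h) * (↑h⁻¹ * (α + β) * ↑h)
        = ↑h⁻¹ * ((α+β) * (α+β) * (α+β)) * ↑h := by
      have hh2' : ∀ x : Ω, (↑h : Ω) * ((↑h⁻¹:Ω) * x) = x := by
        intro x; rw [← mul_assoc, hh2, one_mul]
      simp only [mul_assoc, hh2']
    rw [this, hconj]
  have hβγ : tr (β * β * β) = tr (γ * γ * γ) := by
    rw [← hconj (β * β * β)]
    congr 1
    rw [hβ, hγ]
    simp only [mul_assoc, hh1, mul_one, one_mul]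
  -- abbreviations
  set t2 := tr (α * α * β) with ht2
  set t1 := tr (α * (β * β)) with ht1
  have hc1 : tr (β * α * α) = t2 := by
    rw [hcyc β hβ1 α hα1 α hα1, ← mul_assoc, hcyc α hα1 β hβ1 α hα1, ← mul_assoc, ht2]
  have hc2 : tr (α * β * α) = t2 := by
    rw [hcyc α hα1 β hβ1 α hα1, ← mul_assoc, ht2]
  have hc3 : tr (β * β * α) = t1 := by
    rw [hcyc β hβ1 β hβ1 α hα1, ht1]
  have hc4 : tr (β * α * β) = t1 := by
    rw [hcyc β hβ1 α hα1 β hβ1, ← mul_assoc]; exact hc3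
  have hc5 : tr (α * β * β) = t1 := by rw [mul_assoc, ht1]
  have hexp : tr ((α+β) * (α+β) * (α+β))
      = tr (α * α * α) + (t2 + t2 + t2) + (t1 + t1 + t1) + tr (β * β * β) := by
    have e : (α+β) * (α+β) * (α+β)
        = α*α*α + (α*α*β + α*β*α + β*α*α) + (α*β*β + β*α*β + β*β*α) + β*β*β := by
      noncomm_ring
    rw [e]
    simp only [map_add]
    rw [hc1, hc2, hc3, hc4, hc5, ht2]
  have hrhs : dC (tr (α * β)) = -t2 - t1 := by
    rw [← htrd, hLeib1 α hα1 β hβ1, hMCα, hMCβ, map_sub, neg_mul, map_neg]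
  rw [hA3, hexp, hβγ, hrhs]
  abel
end
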